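/- For x, y ≠ 0, the relations x ⊥_{||·||} Gy and y ⊥_{||·||_a} Gx are equivalent, where both are equivalent to |⟨x,y⟩| = ||x|| · ||y||_a. -/

import Mathlib

/-!
Since `u ↦ -u` preserves the unit sphere, the antinorm of `z` is the dual norm of `⟨·, z⟩`,
which is the first equivalence. By skew-symmetry it is also the operator norm of `⟨z, ·⟩`, and
nondegeneracy in finite dimension makes `z ↦ ⟨z, ·⟩` a bijection onto the dual: an isometry from
`(X, ‖·‖ₐ)` onto `X*`. So the dual norm of `⟨·, x⟩` for the antinorm is the norm of evaluation at
`x` on `X*`, which is `‖x‖` by Hahn–Banach, and the second equivalence follows from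
`|⟨y, x⟩| = |⟨x, y⟩|`.
-/

/-- The dual norm of a (not necessarily linear-structure-related) functional `φ` with
respect to a norm function `N`: `‖φ‖* = sup {|φ z| : N z = 1}`. -/
noncomputable def dualNorm {X : Type*} (N : X → ℝ) (φ : X → ℝ) : ℝ :=
  sSup {r : ℝ | ∃ z : X, N z = 1 ∧ r = |φ z|}

/-- `x ⊥_N φ` iff `|φ x| = N x ⬝ ‖φ‖*`, i.e. the level surface of `φ` through `x`
supports the ball `N x ⬝ B`. -/
def Perp {X : Type*} (N : X → ℝ) (x : X) (φ : X → ℝ) : Prop :=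
  |φ x| = N x * dualNorm N φ

/-- The antinorm: `‖x‖ₐ = sup {⟨y,x⟩ : ‖y‖ = 1}`. -/
noncomputable def antinorm {X : Type*} [NormedAddCommGroup X] [NormedSpace ℝ X]
    (ω : X →ₗ[ℝ] X →ₗ[ℝ] ℝ) (x : X) : ℝ :=
  sSup {r : ℝ | ∃ y : X, ‖y‖ = 1 ∧ r = ω y x}

open Function

section DualNorm

variable {α β : Type*}

lemma dualNorm_comp_of_surjective {G : α → β} (hG : Surjective G) (N φ : β → ℝ) :
    dualNorm (fun z => N (G z)) (fun z => φ (G z)) = dualNorm N φ := by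
  unfold dualNorm
  congr 1
  ext r
  constructor
  · rintro ⟨z, hz, rfl⟩
    exact ⟨G z, hz, rfl⟩
  · rintro ⟨w, hw, rfl⟩
    obtain ⟨z, rfl⟩ := hG w
    exact ⟨z, hw, rfl⟩

lemma dualNorm_neg (N φ : α → ℝ) : dualNorm N (fun z => -φ z) = dualNorm N φ := by
  simp only [dualNorm, abs_neg]

end DualNorm

section NormedSpace

variable {E : Type*} [NormedAddCommGroup E] [NormedSpace ℝ E]

lemma dualNorm_norm_eq_norm (f : StrongDual ℝ E) : dualNorm (‖·‖) f = ‖f‖ := by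
  rw [← f.sSup_sphere_eq_norm, dualNorm]
  congr 1
  ext r
  simp [eq_comm]

lemma dualNorm_norm_apply_eq_norm (x : E) :
    dualNorm (fun f : StrongDual ℝ E => ‖f‖) (fun f => f x) = ‖x‖ :=
  (dualNorm_norm_eq_norm (NormedSpace.inclusionInDoubleDual ℝ E x)).trans
    ((NormedSpace.inclusionInDoubleDualLi ℝ).norm_map x)

lemma antinorm_eq_dualNorm (ω : E →ₗ[ℝ] E →ₗ[ℝ] ℝ) (z : E) :
    antinorm ω z = dualNorm (‖·‖) (fun u => ω u z) := by
  refine csSup_eq_csSup_of_forall_exists_le ?_ ?_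
  · rintro _ ⟨u, hu, rfl⟩
    exact ⟨_, ⟨u, hu, rfl⟩, le_abs_self _⟩
  · rintro _ ⟨u, hu, rfl⟩
    rcases abs_choice (ω u z) with h | h
    · exact ⟨_, ⟨u, hu, rfl⟩, h.le⟩
    · exact ⟨_, ⟨-u, by rwa [norm_neg], rfl⟩, by simp [h]⟩

end NormedSpace

section Symplectic

variable {E : Type*} [NormedAddCommGroup E] [NormedSpace ℝ E] [FiniteDimensional ℝ E]
  {ω : E →ₗ[ℝ] E →ₗ[ℝ] ℝ}

lemma surjective_toContinuousLinearMap_apply (hω : ω.Nondegenerate) :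
    Surjective fun z => LinearMap.toContinuousLinearMap (ω z) :=
  LinearMap.toContinuousLinearMap.surjective.comp (LinearMap.BilinForm.toDual ω hω).surjective

lemma antinorm_eq_norm_toContinuousLinearMap (hskew : ∀ x y : E, ω x y = - ω y x) (z : E) :
    antinorm ω z = ‖LinearMap.toContinuousLinearMap (ω z)‖ :=
  calc antinorm ω z = dualNorm (‖·‖) (fun u => -ω z u) := by
        rw [antinorm_eq_dualNorm]
        exact congrArg _ (funext fun u => hskew u z)
    _ = dualNorm (‖·‖) (LinearMap.toContinuousLinearMap (ω z)) := dualNorm_neg _ _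
    _ = _ := dualNorm_norm_eq_norm _

lemma dualNorm_antinorm_eq_norm (hskew : ∀ x y : E, ω x y = - ω y x) (hω : ω.Nondegenerate)
    (x : E) : dualNorm (antinorm ω) (fun z => ω z x) = ‖x‖ :=
  calc dualNorm (antinorm ω) (fun z => ω z x)
      = dualNorm (fun z => ‖LinearMap.toContinuousLinearMap (ω z)‖)
          (fun z => LinearMap.toContinuousLinearMap (ω z) x) := by
        rw [funext (antinorm_eq_norm_toContinuousLinearMap hskew)]
        rfl
    _ = dualNorm (fun f : StrongDual ℝ E => ‖f‖) (fun f => f x) :=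
        dualNorm_comp_of_surjective (surjective_toContinuousLinearMap_apply hω) (‖·‖) (· x)
    _ = ‖x‖ := dualNorm_norm_apply_eq_norm x

end Symplectic

theorem stmt5_general {X : Type*} [NormedAddCommGroup X] [NormedSpace ℝ X]
    [FiniteDimensional ℝ X]
    (ω : X →ₗ[ℝ] X →ₗ[ℝ] ℝ)
    (hskew : ∀ x y : X, ω x y = - ω y x)
    (hnd : ∀ x : X, (∀ y : X, ω x y = 0) → x = 0)
    (x y : X) :
    (Perp (fun v : X => ‖v‖) x (fun z => ω z y) ↔ |ω x y| = ‖x‖ * antinorm ω y) ∧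
    (|ω x y| = ‖x‖ * antinorm ω y ↔ Perp (antinorm ω) y (fun z => ω z x)) := by
  have hω : ω.Nondegenerate := LinearMap.BilinForm.Nondegenerate.ofSeparatingLeft hnd
  refine ⟨?_, ?_⟩
  · rw [Perp, antinorm_eq_dualNorm]
  · rw [Perp, dualNorm_antinorm_eq_norm hskew hω, hskew y x, abs_neg, mul_comm]

/-- For `x, y ≠ 0`, `x ⊥_{‖·‖} Gy` and `y ⊥_{‖·‖ₐ} Gx` are equivalent,
both being equivalent to `|⟨x,y⟩| = ‖x‖ ⋅ ‖y‖ₐ`; here `G y = ⟨·, y⟩`. -/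
theorem stmt5 {X : Type*} [NormedAddCommGroup X] [NormedSpace ℝ X]
    [FiniteDimensional ℝ X] [Nontrivial X] [StrictConvexSpace ℝ X]
    (ω : X →ₗ[ℝ] X →ₗ[ℝ] ℝ)
    (hskew : ∀ x y : X, ω x y = - ω y x)
    (hnd : ∀ x : X, (∀ y : X, ω x y = 0) → x = 0)
    (heven : Even (Module.finrank ℝ X))
    (hsmooth : ∀ x : X, x ≠ 0 → ∃! f : X →L[ℝ] ℝ, ‖f‖ = 1 ∧ f x = ‖x‖)
    (x y : X) (hx : x ≠ 0) (hy : y ≠ 0) :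
    (Perp (fun v : X => ‖v‖) x (fun z => ω z y) ↔ |ω x y| = ‖x‖ * antinorm ω y) ∧
    (|ω x y| = ‖x‖ * antinorm ω y ↔ Perp (antinorm ω) y (fun z => ω z x)) :=
  stmt5_general ω hskew hnd x y
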